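/- arXiv:1412.1203 — 4 statements merged into one kernel-verified Lean document; each statement's English description precedes it below -/
import Mathlib

section
/- If u and v are complex numbers with 0 ≤ |v| ≤ 1 and (k+1)·m ≤ |u|, where m ≥ 1 is an integer and k > 0 is real, then |(1 + v/u)^(-m) - 1| ≤ |v|/k. -/
/-!
Put `w = v / u` and `x = ‖w‖ = ‖v‖ / ‖u‖ < 1`. Telescoping gives
`(1 + w)⁻¹ ^ m - 1 = -w * ∑ i < m, (1 + w)⁻¹ ^ (i + 1)`, and `‖(1 + w)⁻¹‖ ≤ (1 - x)⁻¹`, so the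
left side has norm at most `m x / (1 - x) ^ m`. Bernoulli's inequality and `‖v‖ ≤ 1` give
`‖u‖ (1 - x) ^ m ≥ ‖u‖ - m ‖v‖ ≥ ‖u‖ - m ≥ k m`, which turns this bound into `‖v‖ / k`.
-/

theorem inv_pow_sub_one_eq_sum {𝕜 : Type*} [Field 𝕜] {y : 𝕜} (hy : y ≠ 0) (m : ℕ) :
    y⁻¹ ^ m - 1 = ∑ i ∈ Finset.range m, y⁻¹ ^ (i + 1) * (1 - y) := by
  calc y⁻¹ ^ m - 1 = ∑ i ∈ Finset.range m, (y⁻¹ ^ (i + 1) - y⁻¹ ^ i) := by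
        rw [Finset.sum_range_sub, pow_zero]
    _ = _ := Finset.sum_congr rfl fun i _ ↦ by
        rw [mul_one_sub, pow_succ, mul_assoc, inv_mul_cancel₀ hy, mul_one]

theorem norm_inv_pow_sub_one_le {𝕜 : Type*} [NormedField 𝕜] {y : 𝕜} {r : ℝ} (hy : y ≠ 0)
    (hyr : ‖y⁻¹‖ ≤ r) (hr : 1 ≤ r) (m : ℕ) :
    ‖y⁻¹ ^ m - 1‖ ≤ m * r ^ m * ‖y - 1‖ := by
  rw [inv_pow_sub_one_eq_sum hy]
  calc ‖∑ i ∈ Finset.range m, y⁻¹ ^ (i + 1) * (1 - y)‖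
      ≤ ∑ i ∈ Finset.range m, ‖y⁻¹ ^ (i + 1) * (1 - y)‖ := norm_sum_le _ _
    _ ≤ ∑ _i ∈ Finset.range m, r ^ m * ‖y - 1‖ := by
        refine Finset.sum_le_sum fun i hi ↦ ?_
        rw [norm_mul, norm_pow, norm_sub_rev]
        gcongr
        calc ‖y⁻¹‖ ^ (i + 1) ≤ r ^ (i + 1) := by gcongr
          _ ≤ r ^ m := pow_le_pow_right₀ hr (Finset.mem_range.mp hi)
    _ = m * r ^ m * ‖y - 1‖ := by
        rw [Finset.sum_const, Finset.card_range, nsmul_eq_mul, mul_assoc]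

theorem norm_one_add_inv_le {𝕜 : Type*} [NormedField 𝕜] {w : 𝕜} (hw : ‖w‖ < 1) :
    ‖(1 + w)⁻¹‖ ≤ (1 - ‖w‖)⁻¹ := by
  have h : 1 - ‖w‖ ≤ ‖1 + w‖ := by
    simpa using norm_sub_norm_le (1 : 𝕜) (-w)
  rw [norm_inv]
  exact inv_anti₀ (by linarith) h

theorem norm_one_add_zpow_neg_sub_one_le {𝕜 : Type*} [NormedField 𝕜] {w : 𝕜} (hw : ‖w‖ < 1)
    (m : ℕ) : ‖(1 + w) ^ (-(m : ℤ)) - 1‖ ≤ m * ‖w‖ / (1 - ‖w‖) ^ m := by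
  have hpos : 0 < 1 - ‖w‖ := by linarith
  have hne : 1 + w ≠ 0 := by
    intro h
    rw [eq_neg_of_add_eq_zero_right h, norm_neg, norm_one] at hw
    exact lt_irrefl _ hw
  have hr : 1 ≤ (1 - ‖w‖)⁻¹ := one_le_inv₀ hpos |>.mpr (by linarith [norm_nonneg w])
  rw [zpow_neg, zpow_natCast, ← inv_pow]
  calc ‖(1 + w)⁻¹ ^ m - 1‖ ≤ m * (1 - ‖w‖)⁻¹ ^ m * ‖1 + w - 1‖ :=
        norm_inv_pow_sub_one_le hne (norm_one_add_inv_le hw) hr m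
    _ = m * ‖w‖ / (1 - ‖w‖) ^ m := by
        rw [add_sub_cancel_left, inv_pow, div_eq_mul_inv]; ring

theorem nat_mul_div_div_one_sub_pow_le {a b k : ℝ} {m : ℕ} (ha₀ : 0 ≤ a) (ha₁ : a ≤ 1)
    (hk : 0 < k) (hm : 1 ≤ m) (hb : (k + 1) * m ≤ b) :
    m * (a / b) / (1 - a / b) ^ m ≤ a / k := by
  have hm' : (1 : ℝ) ≤ m := by exact_mod_cast hm
  have hb₁ : 1 < b := by nlinarith
  set x := a / b
  have hxb : x * b = a := div_mul_cancel₀ a (by positivity)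
  have hx₀ : 0 ≤ x := by positivity
  have hx₁ : x < 1 := (div_lt_one (by linarith)).mpr (by linarith)
  have bernoulli : 1 - m * x ≤ (1 - x) ^ m := by
    simpa [← sub_eq_add_neg] using one_add_mul_le_pow (a := -x) (by linarith) m
  have key : k * m ≤ b * (1 - x) ^ m := by
    nlinarith [mul_le_mul_of_nonneg_left bernoulli (by linarith : (0 : ℝ) ≤ b)]
  rw [div_le_div_iff₀ (pow_pos (by linarith) m) hk]
  calc m * x * k = k * m * x := by ring
    _ ≤ b * (1 - x) ^ m * x := by gcongr
    _ = a * (1 - x) ^ m := by rw [← hxb]; ring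

theorem neg_bin_inequality_general (u v : ℂ) (m : ℕ) (k : ℝ)
    (hm : 1 ≤ m) (hk : 0 < k) (hv : ‖v‖ ≤ 1)
    (huk : (k + 1) * m ≤ ‖u‖) :
    ‖(1 + v / u) ^ (-(m : ℤ)) - 1‖ ≤ ‖v‖ / k := by
  have hu₁ : 1 < ‖u‖ := by
    have : (1 : ℝ) ≤ m := by exact_mod_cast hm
    nlinarith
  have hw : ‖v / u‖ < 1 := by
    rw [norm_div, div_lt_one (by linarith)]
    linarith
  calc ‖(1 + v / u) ^ (-(m : ℤ)) - 1‖ ≤ m * ‖v / u‖ / (1 - ‖v / u‖) ^ m :=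
        norm_one_add_zpow_neg_sub_one_le hw m
    _ ≤ ‖v‖ / k := by
        rw [norm_div]
        exact nat_mul_div_div_one_sub_pow_le (norm_nonneg v) hv hk hm huk

theorem neg_bin_inequality (u v : ℂ) (m : ℕ) (k : ℝ) (hu : u ≠ 0)
    (hm : 1 ≤ m) (hk : 0 < k) (hv : ‖v‖ ≤ 1)
    (huk : (k + 1) * m ≤ ‖u‖) :
    ‖(1 + v / u) ^ (-(m : ℤ)) - 1‖ ≤ ‖v‖ / k :=
  neg_bin_inequality_general u v m k hm hk hv huk
end

section
/- Define σ(θ) = exp(θ + β) - θ^m for a real constant β and a positive integer m, as a function of a complex variable θ. Then σ has at most one zero of order 2 and no zeroes of order 3 or higher; moreover, if θ is a common zero of σ and σ', then θ = m. -/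
/-!
At a common zero of `σ` and `σ'` we have `θ ^ m = exp (θ + β) = m * θ ^ (m - 1)` with `θ ≠ 0`,
so `θ = m`. Hence a multiple zero is unique, and there
`σ'' = m ^ m - m (m - 1) m ^ (m - 2) = m ^ (m - 1) ≠ 0`, so its order is exactly two.
-/

open Complex

lemma mul_natCast_mul_pow_sub_one {R : Type*} [CommSemiring R] (x : R) (n : ℕ) :
    x * (n * x ^ (n - 1)) = n * x ^ n := by
  cases n with
  | zero => simp
  | succ n => rw [Nat.add_sub_cancel, pow_succ]; ring

section ExpAddSubPow

variable (c : ℂ) (m : ℕ)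

lemma hasDerivAt_exp_add (θ : ℂ) : HasDerivAt (fun θ => exp (θ + c)) (exp (θ + c)) θ := by
  simpa using ((hasDerivAt_id θ).add_const c).cexp

lemma deriv_exp_add_sub_pow :
    deriv (fun θ => exp (θ + c) - θ ^ m) = fun θ => exp (θ + c) - m * θ ^ (m - 1) :=
  funext fun θ => ((hasDerivAt_exp_add c θ).sub (hasDerivAt_pow m θ)).deriv

lemma deriv_deriv_exp_add_sub_pow :
    deriv (deriv fun θ => exp (θ + c) - θ ^ m) =
      fun θ => exp (θ + c) - m * ((m - 1 : ℕ) * θ ^ (m - 1 - 1)) := by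
  rw [deriv_exp_add_sub_pow]
  exact funext fun θ =>
    ((hasDerivAt_exp_add c θ).sub ((hasDerivAt_pow (m - 1) θ).const_mul (m : ℂ))).deriv

variable {c m}

lemma eq_natCast_of_exp_add_eq_pow {θ : ℂ} (hm : m ≠ 0) (h₀ : exp (θ + c) = θ ^ m)
    (h₁ : exp (θ + c) = m * θ ^ (m - 1)) : θ = m := by
  have hθ : θ ≠ 0 := by
    rintro rfl
    exact exp_ne_zero _ (h₀.trans (zero_pow hm))
  have hpow : θ ^ m = θ ^ (m - 1) * θ := by rw [← pow_succ, Nat.sub_add_cancel (by omega)]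
  refine mul_left_cancel₀ (pow_ne_zero (m - 1) hθ) ?_
  rw [← hpow, ← h₀, h₁, mul_comm]

end ExpAddSubPow

theorem sigma_zero_order (β : ℝ) (m : ℕ) (hm : 1 ≤ m) :
    let σ : ℂ → ℂ := fun θ => Complex.exp (θ + (β : ℂ)) - θ ^ m
    (∀ θ : ℂ, σ θ = 0 → deriv σ θ = 0 → θ = (m : ℂ)) ∧
      (∀ θ : ℂ, σ θ = 0 → deriv σ θ = 0 → deriv (deriv σ) θ ≠ 0) := by
  intro σ
  have multiple_zero_eq : ∀ θ : ℂ, σ θ = 0 → deriv σ θ = 0 → θ = m := by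
    intro θ h₀ h₁
    rw [deriv_exp_add_sub_pow] at h₁
    exact eq_natCast_of_exp_add_eq_pow (by omega) (sub_eq_zero.mp h₀) (sub_eq_zero.mp h₁)
  refine ⟨multiple_zero_eq, fun θ h₀ h₁ => ?_⟩
  obtain rfl := multiple_zero_eq θ h₀ h₁
  obtain ⟨n, rfl⟩ : ∃ n, m = n + 1 := ⟨m - 1, by omega⟩
  rw [deriv_deriv_exp_add_sub_pow]
  dsimp only
  rw [sub_eq_zero.mp h₀, Nat.add_sub_cancel,
    mul_natCast_mul_pow_sub_one, pow_succ', Nat.cast_succ, ← sub_mul, add_sub_cancel_left, one_mul]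
  exact pow_ne_zero n (Nat.cast_add_one_ne_zero n)
end

section
/- Let m be a positive integer and β real. Define on the set where |m·ln(ρ) - β| < ρ the functions x(ρ) = m·ln(ρ) - β, y(ρ) = (ρ² - x(ρ)²)^(1/2), ω(ρ) = arccos(x(ρ)/ρ), and h(ρ) = y(ρ) - m·ω(ρ). Then h'(ρ) = (ρ² - 2m·x(ρ) + m²)/(ρ·y(ρ)), which is strictly positive on this set. -/
open Real

lemma sqrt_one_sub_div_sq {x ρ : ℝ} (hρ : 0 < ρ) :
    √(1 - (x / ρ) ^ 2) = √(ρ ^ 2 - x ^ 2) / ρ := by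
  rw [show 1 - (x / ρ) ^ 2 = (ρ ^ 2 - x ^ 2) / ρ ^ 2 by field_simp, sqrt_div' _ (sq_nonneg ρ),
    sqrt_sq hρ.le]

section

variable {f : ℝ → ℝ} {f' ρ : ℝ}

lemma HasDerivAt.sqrt_sq_sub_sq (hf : HasDerivAt f f' ρ) (h : f ρ ^ 2 < ρ ^ 2) :
    HasDerivAt (fun r => √(r ^ 2 - f r ^ 2)) ((ρ - f ρ * f') / √(ρ ^ 2 - f ρ ^ 2)) ρ := by
  have hsq : HasDerivAt (fun r => r ^ 2 - f r ^ 2) (2 * ρ - 2 * f ρ * f') ρ :=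
    ((hasDerivAt_pow 2 ρ).sub (hf.pow 2)).congr_deriv (by ring)
  refine (hsq.sqrt (sub_pos.mpr h).ne').congr_deriv ?_
  field_simp

lemma HasDerivAt.arccos_div_self (hf : HasDerivAt f f' ρ) (hρ : 0 < ρ) (h : |f ρ| < ρ) :
    HasDerivAt (fun r => arccos (f r / r))
      ((f ρ - ρ * f') / (ρ * √(ρ ^ 2 - f ρ ^ 2))) ρ := by
  obtain ⟨hlo, hhi⟩ := abs_lt.mp h
  have hne_neg : f ρ / ρ ≠ -1 := by
    rw [Ne, div_eq_iff hρ.ne']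
    linarith
  have hne_one : f ρ / ρ ≠ 1 := by
    rw [Ne, div_eq_iff hρ.ne']
    linarith
  have hdiv : HasDerivAt (fun r => f r / r) ((f' * ρ - f ρ * 1) / ρ ^ 2) ρ :=
    hf.div (hasDerivAt_id' ρ) hρ.ne'
  have harccos := (hasDerivAt_arccos hne_neg hne_one).comp ρ (h := fun r => f r / r) hdiv
  refine harccos.congr_deriv ?_
  rw [sqrt_one_sub_div_sq hρ]
  field_simp
  ring

end

lemma sq_sub_two_mul_mul_add_sq_pos {a x ρ : ℝ} (ha : 0 ≤ a) (hρ : 0 < ρ) (hx : x < ρ) :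
    0 < ρ ^ 2 - 2 * a * x + a ^ 2 := by
  -- `ρ² - 2ax + a² = (ρ - a)² + 2a(ρ - x)`
  rcases ha.eq_or_lt with rfl | ha
  · nlinarith
  · nlinarith [sq_nonneg (ρ - a), mul_pos ha (sub_pos.mpr hx)]

theorem h_deriv_pos_general (m : ℕ) (β ρ : ℝ) (hρ : 0 < ρ)
    (hx : |(m : ℝ) * Real.log ρ - β| < ρ) :
    let x : ℝ → ℝ := fun r => (m : ℝ) * Real.log r - β
    let y : ℝ → ℝ := fun r => Real.sqrt (r ^ 2 - x r ^ 2)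
    let ω : ℝ → ℝ := fun r => Real.arccos (x r / r)
    let h : ℝ → ℝ := fun r => y r - (m : ℝ) * ω r
    HasDerivAt h ((ρ ^ 2 - 2 * m * x ρ + (m : ℝ) ^ 2) / (ρ * y ρ)) ρ ∧
      0 < (ρ ^ 2 - 2 * m * x ρ + (m : ℝ) ^ 2) / (ρ * y ρ) := by
  intro x y ω h
  obtain ⟨hx_lo, hx_hi⟩ := abs_lt.mp hx
  have hx_sq : x ρ ^ 2 < ρ ^ 2 := sq_lt_sq' hx_lo hx_hi
  have hy : 0 < y ρ := sqrt_pos.mpr (sub_pos.mpr hx_sq)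
  have hx' : HasDerivAt x (m * ρ⁻¹) ρ :=
    ((hasDerivAt_log hρ.ne').const_mul (m : ℝ)).sub_const β
  refine ⟨?_, div_pos ?_ (mul_pos hρ hy)⟩
  · refine ((hx'.sqrt_sq_sub_sq hx_sq).sub
      ((hx'.arccos_div_self hρ hx).const_mul (m : ℝ))).congr_deriv ?_
    change _ - _ = _ / (ρ * √(ρ ^ 2 - x ρ ^ 2))
    field_simp
    ring
  · exact sq_sub_two_mul_mul_add_sq_pos (Nat.cast_nonneg m) hρ hx_hi

theorem h_deriv_pos (m : ℕ) (hm : 1 ≤ m) (β ρ : ℝ) (hρ : 0 < ρ)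
    (hx : |(m : ℝ) * Real.log ρ - β| < ρ) :
    let x : ℝ → ℝ := fun r => (m : ℝ) * Real.log r - β
    let y : ℝ → ℝ := fun r => Real.sqrt (r ^ 2 - x r ^ 2)
    let ω : ℝ → ℝ := fun r => Real.arccos (x r / r)
    let h : ℝ → ℝ := fun r => y r - (m : ℝ) * ω r
    HasDerivAt h ((ρ ^ 2 - 2 * m * x ρ + (m : ℝ) ^ 2) / (ρ * y ρ)) ρ ∧
      0 < (ρ ^ 2 - 2 * m * x ρ + (m : ℝ) ^ 2) / (ρ * y ρ) :=
  h_deriv_pos_general m β ρ hρ hx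
end

section
/- Define h(ω, η, ξ, m) = exp(ωη)·(1 + η/ξ)^(-m) - 1 for a nonzero real ω, complex η and ξ, and positive integer m. If |η| < min(1/2, 1/(3|ω|/2)) and |ξ| > (8/|ω| + 1)·m, then (|ω|/4)·|η| ≤ |h(ω, η, ξ, m)| ≤ (7|ω|/4)·|η|. -/
/-!
Put `z = ω η` and `w = η / ξ`. The hypotheses give `‖z‖ ≤ 2/3` and `m ‖w‖ ≤ ‖z‖ / 8`. Writing
`exp z (1 + w)⁻ᵐ - 1 - z = (exp z - 1 - z) + exp z ((1 + w)⁻ᵐ - 1)`, the first term is quadratic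
in `‖z‖` and the second is of order `m ‖w‖`, so together they are at most `(3/4) ‖z‖`. The two
bounds then follow from the triangle inequality, since `‖z‖ = |ω| ‖η‖`.
-/

open Complex

theorem norm_one_add_pow_sub_one_le {R : Type*} [SeminormedRing R] [NormOneClass R]
    (w : R) (n : ℕ) : ‖(1 + w) ^ n - 1‖ ≤ (1 + ‖w‖) ^ n - 1 := by
  induction n with
  | zero => simp
  | succ n ih =>
    have h1w : ‖1 + w‖ ≤ 1 + ‖w‖ := (norm_add_le _ _).trans_eq (by rw [norm_one])
    calc ‖(1 + w) ^ (n + 1) - 1‖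
        = ‖((1 + w) ^ n - 1) * (1 + w) + w‖ := by
          rw [pow_succ]; congr 1; noncomm_ring
      _ ≤ ‖(1 + w) ^ n - 1‖ * ‖1 + w‖ + ‖w‖ :=
        (norm_add_le _ _).trans (by gcongr; exact norm_mul_le _ _)
      _ ≤ ((1 + ‖w‖) ^ n - 1) * (1 + ‖w‖) + ‖w‖ := by
        gcongr
        exact (norm_nonneg _).trans ih
      _ = (1 + ‖w‖) ^ (n + 1) - 1 := by ring

theorem norm_inv_sub_one_le {K : Type*} [NormedDivisionRing K] {a : K} {δ : ℝ}
    (ha : ‖a - 1‖ ≤ δ) (hδ : δ < 1) : ‖a⁻¹ - 1‖ ≤ δ / (1 - δ) := by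
  have ha_norm : 1 - δ ≤ ‖a‖ := by
    have := norm_sub_norm_le (1 : K) (1 - a)
    rw [norm_one, sub_sub_cancel, ← norm_neg, neg_sub] at this
    linarith
  have ha0 : a ≠ 0 := norm_pos_iff.mp (by linarith)
  calc ‖a⁻¹ - 1‖ = ‖a - 1‖ / ‖a‖ := by
        rw [show a⁻¹ - 1 = a⁻¹ * (1 - a) by rw [mul_sub, inv_mul_cancel₀ ha0, mul_one],
          norm_mul, norm_inv, ← norm_neg (1 - a), neg_sub, inv_mul_eq_div]
      _ ≤ δ / (1 - δ) := div_le_div₀ ((norm_nonneg _).trans ha) ha (by linarith) ha_norm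

theorem norm_inv_one_add_pow_sub_one_le {K : Type*} [NormedDivisionRing K] (w : K) (n : ℕ)
    (hw : 2 * (n * ‖w‖) < 1) : ‖((1 + w) ^ n)⁻¹ - 1‖ ≤ n * ‖w‖ / (1 - 2 * (n * ‖w‖)) := by
  set u := n * ‖w‖ with hu
  have hu0 : 0 ≤ u := by positivity
  have hpow : ‖(1 + w) ^ n - 1‖ ≤ u / (1 - u) :=
    calc ‖(1 + w) ^ n - 1‖ ≤ (1 + ‖w‖) ^ n - 1 := norm_one_add_pow_sub_one_le w n
      _ ≤ Real.exp u - 1 := by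
        gcongr
        rw [hu, Real.exp_nat_mul]
        gcongr
        linarith [Real.add_one_le_exp ‖w‖]
      _ ≤ 1 / (1 - u) - 1 := by
        gcongr
        exact Real.exp_bound_div_one_sub_of_interval hu0 (by linarith)
      _ = u / (1 - u) := by field_simp [show 1 - u ≠ 0 by linarith]; ring
  calc ‖((1 + w) ^ n)⁻¹ - 1‖ ≤ u / (1 - u) / (1 - u / (1 - u)) :=
        norm_inv_sub_one_le hpow (by rw [div_lt_one (by linarith)]; linarith)
    _ = u / (1 - 2 * u) := by
        field_simp [show 1 - u ≠ 0 by linarith, show 1 - 2 * u ≠ 0 by linarith]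
        ring

theorem norm_exp_sub_one_sub_self_le {z : ℂ} (hz : ‖z‖ ≤ 1) :
    ‖exp z - 1 - z‖ ≤ ‖z‖ ^ 2 / 2 + 2 / 9 * ‖z‖ ^ 3 := by
  have h3 := Complex.exp_bound hz three_pos
  have hsum : ∑ m ∈ Finset.range 3, z ^ m / (m.factorial : ℂ) = 1 + z + z ^ 2 / 2 := by
    simp [Finset.sum_range_succ, Nat.factorial]
  rw [hsum] at h3
  norm_num [Nat.factorial] at h3
  calc ‖exp z - 1 - z‖ = ‖(exp z - (1 + z + z ^ 2 / 2)) + z ^ 2 / 2‖ := by ring_nf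
    _ ≤ ‖exp z - (1 + z + z ^ 2 / 2)‖ + ‖z ^ 2 / 2‖ := norm_add_le _ _
    _ ≤ ‖z‖ ^ 2 / 2 + 2 / 9 * ‖z‖ ^ 3 := by
        rw [norm_div, norm_pow, Complex.norm_two]
        linarith

theorem norm_exp_le_two {z : ℂ} (hz : ‖z‖ ≤ 2 / 3) : ‖exp z‖ ≤ 2 :=
  calc ‖exp z‖ ≤ Real.exp ‖z‖ := norm_exp_le_exp_norm z
    _ ≤ Real.exp (Real.log 2) := Real.exp_le_exp.mpr (by linarith [Real.log_two_gt_d9])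
    _ = 2 := Real.exp_log two_pos

theorem norm_exp_mul_inv_one_add_pow_sub_one_sub_le {z w : ℂ} {n : ℕ} (hz : ‖z‖ ≤ 2 / 3)
    (hw : n * ‖w‖ ≤ ‖z‖ / 8) : ‖exp z * ((1 + w) ^ n)⁻¹ - 1 - z‖ ≤ 3 / 4 * ‖z‖ := by
  have hz0 := norm_nonneg z
  have hw0 : 0 ≤ n * ‖w‖ := by positivity
  have hB : ‖((1 + w) ^ n)⁻¹ - 1‖ ≤ 6 / 5 * (n * ‖w‖) := by
    refine (norm_inv_one_add_pow_sub_one_le w n (by linarith)).trans ?_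
    rw [div_le_iff₀ (by linarith)]
    nlinarith
  calc ‖exp z * ((1 + w) ^ n)⁻¹ - 1 - z‖
      = ‖(exp z - 1 - z) + exp z * (((1 + w) ^ n)⁻¹ - 1)‖ := by ring_nf
    _ ≤ ‖exp z - 1 - z‖ + ‖exp z‖ * ‖((1 + w) ^ n)⁻¹ - 1‖ :=
        (norm_add_le _ _).trans_eq (by rw [norm_mul])
    _ ≤ (‖z‖ ^ 2 / 2 + 2 / 9 * ‖z‖ ^ 3) + 2 * (6 / 5 * (n * ‖w‖)) := by
        gcongr
        exacts [norm_exp_sub_one_sub_self_le (by linarith), norm_exp_le_two hz]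
    _ ≤ 3 / 4 * ‖z‖ := by
        -- the three terms are at most `(1/3 + 8/81 + 3/10) ‖z‖`
        have : ‖z‖ * ‖z‖ ≤ 2 / 3 * ‖z‖ := by nlinarith
        nlinarith

theorem h_quasi_linearity_general (ω : ℝ) (hω : ω ≠ 0) (η ξ : ℂ)
    (m : ℕ)
    (hη : ‖η‖ < min (1/2) (1 / (3 * |ω| / 2)))
    (hξbig : (8 / |ω| + 1) * m < ‖ξ‖) :
    (|ω| / 4) * ‖η‖ ≤
        ‖Complex.exp (ω * η) * (1 + η / ξ) ^ (-(m : ℤ)) - 1‖ ∧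
      ‖Complex.exp (ω * η) * (1 + η / ξ) ^ (-(m : ℤ)) - 1‖ ≤
        (7 * |ω| / 4) * ‖η‖ := by
  have hω_pos : 0 < |ω| := abs_pos.mpr hω
  have hz : ‖(ω : ℂ) * η‖ = |ω| * ‖η‖ := by rw [norm_mul, Complex.norm_real, Real.norm_eq_abs]
  have hz_le : ‖(ω : ℂ) * η‖ ≤ 2 / 3 := by
    have := hη.trans_le (min_le_right _ _)
    rw [lt_div_iff₀ (by positivity)] at this
    rw [hz]
    linarith
  have hξ_pos : 0 < ‖ξ‖ := lt_of_le_of_lt (by positivity) hξbig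
  have hξ_large : 8 * m ≤ |ω| * ‖ξ‖ := by
    have : 8 / |ω| * m ≤ ‖ξ‖ := by nlinarith [m.cast_nonneg (α := ℝ)]
    rw [div_mul_eq_mul_div, div_le_iff₀ hω_pos] at this
    linarith
  have hw : (m : ℝ) * ‖η / ξ‖ ≤ ‖(ω : ℂ) * η‖ / 8 := by
    rw [norm_div, hz, mul_div_assoc', div_le_div_iff₀ hξ_pos (by norm_num)]
    nlinarith [norm_nonneg η]
  have key := norm_exp_mul_inv_one_add_pow_sub_one_sub_le hz_le hw
  rw [← zpow_natCast, ← zpow_neg, hz] at key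
  obtain ⟨hlower, hupper⟩ := abs_le.mp ((abs_norm_sub_norm_le _ _).trans key)
  rw [hz] at hlower hupper
  constructor <;> linarith

theorem h_quasi_linearity (ω : ℝ) (hω : ω ≠ 0) (η ξ : ℂ) (hξ : ξ ≠ 0)
    (m : ℕ) (hm : 1 ≤ m)
    (hη : ‖η‖ < min (1/2) (1 / (3 * |ω| / 2)))
    (hξbig : (8 / |ω| + 1) * m < ‖ξ‖) :
    (|ω| / 4) * ‖η‖ ≤
        ‖Complex.exp (ω * η) * (1 + η / ξ) ^ (-(m : ℤ)) - 1‖ ∧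
      ‖Complex.exp (ω * η) * (1 + η / ξ) ^ (-(m : ℤ)) - 1‖ ≤
        (7 * |ω| / 4) * ‖η‖ :=
  h_quasi_linearity_general ω hω η ξ m hη hξbig
end
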